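/- Let Σ : ℝ^n → ℝ^{n×m} be a C¹ diffusion matrix such that for each column j there is an index π(j) with Σ_{i,j}(x) = 0 for all i ≠ π(j), and Σ_{π(j),j}(x) depends only on x_{π(j)}. If π is injective, then Σ satisfies the commutativity condition Σ_i Σ_{i,j₂} ∂Σ_{k,j₁}/∂x_i = Σ_i Σ_{i,j₁} ∂Σ_{k,j₂}/∂x_i for all j₁, j₂ ∈ {1,…,m}, k ∈ {1,…,n}. -/
import Mathlib


/-- Partial derivative of `f : (Fin n → ℝ) → ℝ` in the `i`-th coordinate at `x`. -/
noncomputable def pderiv' {n : ℕ} (i : Fin n) (f : (Fin n → ℝ) → ℝ) (x : Fin n → ℝ) : ℝ :=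
  deriv (fun s => f (Function.update x i s)) (x i)

/-- If each noise column `j` of a diffusion matrix `Σ` acts only on the single coordinate
`π j` through a `C¹` function of that coordinate alone, and `π` is injective, then `Σ`
satisfies the commutativity condition (equation (18) of the paper). -/
theorem commutative_noise_of_single_coordinate_columns
    (n m : ℕ) (π : Fin m → Fin n) (hπ : Function.Injective π)
    (g : Fin m → ℝ → ℝ) (hg : ∀ j, ContDiff ℝ 1 (g j))
    (S : (Fin n → ℝ) → Fin n → Fin m → ℝ)
    (hS : ∀ x i j, S x i j = if i = π j then g j (x (π j)) else 0) :
    ∀ x (j₁ j₂ : Fin m) (k : Fin n),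
      (∑ i : Fin n, S x i j₂ * pderiv' i (fun y => S y k j₁) x) =
      (∑ i : Fin n, S x i j₁ * pderiv' i (fun y => S y k j₂) x) := by
  intro x j₁ j₂ k
  by_cases h : j₁ = j₂
  · subst h; rfl
  · have key : ∀ (ja jb : Fin m), ja ≠ jb →
        (∑ i : Fin n, S x i jb * pderiv' i (fun y => S y k ja) x) = 0 := by
      intro ja jb hne
      apply Finset.sum_eq_zero
      intro i _
      by_cases hi : i = π jb
      · have hz : pderiv' i (fun y => S y k ja) x = 0 := by
          unfold pderiv'
          by_cases hk : k = π ja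
          · have hne' : π ja ≠ i := by
              rw [hi]
              intro hcon
              exact hne (hπ hcon)
            have heq : (fun s => S (Function.update x i s) k ja)
                = fun _ => g ja (x (π ja)) := by
              funext s
              rw [hS, if_pos hk, Function.update_of_ne hne']
            rw [heq]
            simp
          · have heq : (fun s => S (Function.update x i s) k ja) = fun _ => (0:ℝ) := by
              funext s
              rw [hS, if_neg hk]
            rw [heq]
            simp
        rw [hz, mul_zero]
      · rw [hS, if_neg hi, zero_mul]
    rw [key j₁ j₂ h, key j₂ j₁ (Ne.symm h)]
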